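/- Let K ⊆ ℝ^{r×r} be a nonempty compact set every element of which is stable. Then there exists a constant c > 0 such that for every A_r ∈ K and every M ∈ ℝ^{r×r}, if Z ∈ ℝ^{r×r} satisfies the Lyapunov equation A_r Z + Z A_rᵀ + M = 0, then ‖Z‖_F ≤ c ‖M‖_F. -/

import Mathlib

open Matrix

/-- A square real matrix is stable if every eigenvalue (as a complex matrix)
has negative real part. -/
def IsStable {r : ℕ} (A : Matrix (Fin r) (Fin r) ℝ) : Prop :=
  ∀ μ ∈ spectrum ℂ (A.map Complex.ofReal), μ.re < 0

/-- The Frobenius norm of a real matrix. -/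
noncomputable def frobNorm {m n : ℕ} (M : Matrix (Fin m) (Fin n) ℝ) : ℝ :=
  Real.sqrt (Matrix.trace (Mᵀ * M))

/-!
For stable `A` the spectra of `A` and `-Aᵀ` are disjoint, so by Sylvester's theorem the Lyapunov
operator `Z ↦ A Z + Z Aᵀ` is injective, hence invertible. It depends continuously on `A`, and
inversion is continuous on the units of the Banach algebra of operators, so the norms of the
inverse operators are bounded on the compact set `K`.
-/

open Polynomial

theorem IsCompact.exists_norm_le_mul_norm_apply_of_isUnit {X 𝕜 E : Type*} [TopologicalSpace X]
    [NontriviallyNormedField 𝕜] [NormedAddCommGroup E] [NormedSpace 𝕜 E] [CompleteSpace E]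
    {K : Set X} (hK : IsCompact K) {f : X → E →L[𝕜] E} (hf : ContinuousOn f K)
    (hunit : ∀ x ∈ K, IsUnit (f x)) : ∃ C > 0, ∀ x ∈ K, ∀ v, ‖v‖ ≤ C * ‖f x v‖ := by
  have hinv : ContinuousOn (fun x ↦ ‖Ring.inverse (f x)‖) K := by
    intro x hx
    have h := NormedRing.inverse_continuousAt (hunit x hx).unit
    rw [IsUnit.unit_spec] at h
    exact (h.comp_continuousWithinAt (hf x hx)).norm
  obtain ⟨C, hC⟩ := hK.exists_bound_of_continuousOn hinv
  refine ⟨max C 1, by positivity, fun x hx v ↦ ?_⟩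
  calc ‖v‖ = ‖Ring.inverse (f x) (f x v)‖ := by
        rw [← mul_apply_eq_comp, Ring.inverse_mul_cancel _ (hunit x hx), one_apply_eq_self]
    _ ≤ ‖Ring.inverse (f x)‖ * ‖f x v‖ := (Ring.inverse (f x)).le_opNorm _
    _ ≤ max C 1 * ‖f x v‖ := by
        gcongr
        exact le_max_of_le_left (by simpa using hC x hx)

namespace Matrix

variable {m n : Type*} [Fintype m] [DecidableEq m] [Fintype n] [DecidableEq n]

theorem spectrum_transpose {K : Type*} [Field K] (A : Matrix n n K) :
    spectrum K Aᵀ = spectrum K A := by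
  ext μ
  simp only [mem_spectrum_iff_isRoot_charpoly, charpoly_transpose]

theorem aeval_mul_eq_mul_aeval {R : Type*} [CommRing R] {A : Matrix m m R} {B : Matrix n n R}
    {Z : Matrix m n R} (hZ : A * Z = Z * B) (p : R[X]) : aeval A p * Z = Z * aeval B p := by
  induction p using Polynomial.induction_on' with
  | add p q hp hq => rw [map_add, map_add, Matrix.add_mul, Matrix.mul_add, hp, hq]
  | monomial k a =>
    have hpow : A ^ k * Z = Z * B ^ k := by
      induction k with
      | zero => simp
      | succ k ih =>
        rw [pow_succ, Matrix.mul_assoc, hZ, ← Matrix.mul_assoc, ih, Matrix.mul_assoc, ← pow_succ]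
    rw [aeval_monomial, aeval_monomial, ← Algebra.smul_def, ← Algebra.smul_def, Matrix.smul_mul,
      Matrix.mul_smul, hpow]

/-- Sylvester's theorem. -/
theorem eq_zero_of_mul_eq_mul_of_disjoint_spectrum {K : Type*} [Field K] [IsAlgClosed K]
    {A : Matrix m m K} {B : Matrix n n K} {Z : Matrix m n K}
    (hAB : Disjoint (spectrum K A) (spectrum K B)) (hZ : A * Z = Z * B) : Z = 0 := by
  cases isEmpty_or_nonempty n
  · exact Subsingleton.elim _ _
  have hdeg : 0 < B.charpoly.degree := by
    rw [charpoly_degree_eq_dim]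
    exact_mod_cast Fintype.card_pos
  have hunit : IsUnit (aeval A B.charpoly) := by
    by_contra h
    have h0 := (spectrum.zero_mem_iff K).mpr h
    rw [spectrum.map_polynomial_aeval_of_degree_pos A _ hdeg] at h0
    obtain ⟨μ, hμA, hμB⟩ := h0
    exact hAB.ne_of_mem hμA (mem_spectrum_iff_isRoot_charpoly.mpr hμB) rfl
  have hZ0 : aeval A B.charpoly * Z = 0 := by
    rw [aeval_mul_eq_mul_aeval hZ, aeval_self_charpoly, Matrix.mul_zero]
  calc Z = (↑hunit.unit⁻¹ * ↑hunit.unit : Matrix m m K) * Z := by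
        rw [Units.inv_mul, Matrix.one_mul]
    _ = 0 := by rw [Matrix.mul_assoc, IsUnit.unit_spec, hZ0, Matrix.mul_zero]

end Matrix

theorem IsStable.eq_zero_of_mul_add_mul_transpose_eq_zero {r : ℕ} {A : Matrix (Fin r) (Fin r) ℝ}
    (hA : IsStable A) {Z : Matrix (Fin r) (Fin r) ℝ} (hZ : A * Z + Z * Aᵀ = 0) : Z = 0 := by
  set A' := A.map Complex.ofReal
  have hdisj : Disjoint (spectrum ℂ A') (spectrum ℂ (-A'ᵀ)) := by
    rw [← spectrum.neg_eq, spectrum_transpose, Set.disjoint_left]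
    intro μ hμ hμneg
    have h1 := hA μ hμ
    have h2 := hA (-μ) hμneg
    rw [Complex.neg_re] at h2
    linarith
  have hZ' : A' * Z.map Complex.ofReal = Z.map Complex.ofReal * -A'ᵀ := by
    rw [Matrix.mul_neg, eq_neg_iff_add_eq_zero, ← transpose_map]
    have h := congrArg Complex.ofRealHom.mapMatrix hZ
    rwa [map_add, map_mul, map_mul, map_zero] at h
  refine Matrix.map_injective Complex.ofReal_injective ?_
  simpa using eq_zero_of_mul_eq_mul_of_disjoint_spectrum hdisj hZ'

theorem frobNorm_neg {m n : ℕ} (M : Matrix (Fin m) (Fin n) ℝ) : frobNorm (-M) = frobNorm M := by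
  simp [frobNorm]

section Frobenius

attribute [local instance] Matrix.frobeniusNormedAddCommGroup Matrix.frobeniusNormedSpace
  Matrix.frobeniusNormedRing Matrix.frobeniusNormedAlgebra

theorem frobNorm_eq_norm {m n : ℕ} (M : Matrix (Fin m) (Fin n) ℝ) : frobNorm M = ‖M‖ := by
  rw [frobNorm, frobenius_norm_def, Real.sqrt_eq_rpow, trace, Finset.sum_comm]
  congr 1
  simp [mul_apply, sq]

namespace Matrix

variable {𝕜 n : Type*} [RCLike 𝕜] [Fintype n] [DecidableEq n]

noncomputable def lyapunovOperator (A : Matrix n n 𝕜) : Matrix n n 𝕜 →L[𝕜] Matrix n n 𝕜 :=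
  ContinuousLinearMap.mul 𝕜 _ A + (ContinuousLinearMap.mul 𝕜 _).flip Aᵀ

@[simp]
theorem lyapunovOperator_apply (A Z : Matrix n n 𝕜) :
    lyapunovOperator A Z = A * Z + Z * Aᵀ :=
  rfl

theorem continuous_lyapunovOperator : Continuous (lyapunovOperator : Matrix n n 𝕜 → _) := by
  unfold lyapunovOperator
  fun_prop

end Matrix

theorem IsStable.isUnit_lyapunovOperator {r : ℕ} {A : Matrix (Fin r) (Fin r) ℝ}
    (hA : IsStable A) : IsUnit (lyapunovOperator A) := by
  have hinj : Function.Injective (lyapunovOperator A) :=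
    (injective_iff_map_eq_zero _).mpr fun _ hZ ↦ hA.eq_zero_of_mul_add_mul_transpose_eq_zero hZ
  have hsurj :=
    (LinearMap.injective_iff_surjective (f := (lyapunovOperator A).toLinearMap)).mp hinj
  exact (lyapunovOperator A).isUnit_iff_bijective.mpr ⟨hinj, hsurj⟩

theorem IsCompact.exists_frobNorm_le_mul_frobNorm_lyapunov {r : ℕ}
    {K : Set (Matrix (Fin r) (Fin r) ℝ)} (hK : IsCompact K) (hstable : ∀ A ∈ K, IsStable A) :
    ∃ C > 0, ∀ A ∈ K, ∀ Z, frobNorm Z ≤ C * frobNorm (A * Z + Z * Aᵀ) := by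
  obtain ⟨C, hC, hbound⟩ := hK.exists_norm_le_mul_norm_apply_of_isUnit
    continuous_lyapunovOperator.continuousOn fun A hA ↦ (hstable A hA).isUnit_lyapunovOperator
  refine ⟨C, hC, fun A hA Z ↦ ?_⟩
  rw [frobNorm_eq_norm, frobNorm_eq_norm]
  exact hbound A hA Z

end Frobenius

theorem lyapunov_uniform_bound_general {r : ℕ}
    (K : Set (Matrix (Fin r) (Fin r) ℝ))
    (hKcpt : IsCompact K) (hKstable : ∀ M ∈ K, IsStable M) :
    ∃ c > (0 : ℝ), ∀ A_r ∈ K, ∀ M Z : Matrix (Fin r) (Fin r) ℝ,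
      A_r * Z + Z * A_rᵀ + M = 0 → frobNorm Z ≤ c * frobNorm M := by
  obtain ⟨c, hc, hbound⟩ := hKcpt.exists_frobNorm_le_mul_frobNorm_lyapunov hKstable
  refine ⟨c, hc, fun A hA M Z hZ ↦ ?_⟩
  rw [← frobNorm_neg M, ← eq_neg_of_add_eq_zero_left hZ]
  exact hbound A hA Z

/-- uniform bound on solutions of the Lyapunov equation
`A_r Z + Z A_rᵀ + M = 0` over a compact set `K` of stable matrices `A_r`. -/
theorem lyapunov_uniform_bound {r : ℕ}
    (K : Set (Matrix (Fin r) (Fin r) ℝ)) (hKne : K.Nonempty)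
    (hKcpt : IsCompact K) (hKstable : ∀ M ∈ K, IsStable M) :
    ∃ c > (0 : ℝ), ∀ A_r ∈ K, ∀ M Z : Matrix (Fin r) (Fin r) ℝ,
      A_r * Z + Z * A_rᵀ + M = 0 → frobNorm Z ≤ c * frobNorm M :=
  lyapunov_uniform_bound_general K hKcpt hKstable
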